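/- For all integers s and t with 1 ≤ s ≤ t − 1, the identity w₂^{2^{s−1}−1}·(g_{2^t−2^{s−1}−2})² = Σ_{j=0}^{s−2} w₂^{2^{s−1}−2^{j+1}}·w₃^{2^j−1}·g_{2^{t+1}−2^s+2^j−3} holds in R, where the right-hand side is understood to be zero when s = 1. -/
import Mathlib


open MvPolynomial Finset

noncomputable section

/-- `R2 = (ℤ/2)[w₂, w₃]`, the polynomial ring in two variables over `ℤ/2ℤ`. -/
abbrev R2 : Type := MvPolynomial (Fin 2) (ZMod 2)

/-- The variable `w₂`. -/
def w2 : R2 := X 0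

/-- The variable `w₃`. -/
def w3 : R2 := X 1

/-- The polynomials `g_r`: `g₀ = 1`, `g₁ = 0`, `g₂ = w₂`,
`g_{r+3} = w₂ g_{r+1} + w₃ g_r`. -/
def g : ℕ → R2
  | 0 => 1
  | 1 => 0
  | 2 => w2
  | (r+3) => w2 * g (r+1) + w3 * g r

/-- `R2` has characteristic 2. -/
lemma h2 : (2 : R2) = 0 := by
  have := CharP.cast_eq_zero R2 2
  exact_mod_cast this

lemma g_rec (r : ℕ) : g (r+3) = w2 * g (r+1) + w3 * g r := rfl

/-- Doubling identities: `g_{2n+2} = g_{n+1}² + w₂ g_n²` and `g_{2n+3} = w₃ g_n²`. -/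
lemma gdbl (n : ℕ) : g (2*n+2) = g (n+1)^2 + w2 * g n ^ 2 ∧ g (2*n+3) = w3 * g n ^ 2 := by
  induction n using Nat.strong_induction_on with
  | _ n ih =>
    match n with
    | 0 => constructor <;> (show g _ = _) <;> simp [g]
    | 1 =>
      constructor
      · show g 4 = g 2 ^2 + w2 * g 1 ^2
        simp [g]; ring
      · show g 5 = w3 * g 1 ^ 2
        show w2 * g 3 + w3 * g 2 = _
        simp [g]
        linear_combination (w2 * w3) * h2
    | 2 =>
      constructor
      · show g 6 = g 3 ^2 + w2 * g 2 ^2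
        show w2 * g 4 + w3 * g 3 = _
        simp [g]; ring
      · show g 7 = w3 * g 2 ^ 2
        show w2 * g 5 + w3 * g 4 = _
        show w2 * (w2 * g 3 + w3 * g 2) + w3 * g 4 = _
        simp [g]
        linear_combination (w2^2*w3) * h2
    | (m+3) =>
      have h1 := (ih (m+1) (by omega)).2
      have h0 := ih (m+2) (by omega)
      have h0e := h0.1
      have h0o := h0.2
      rw [show m+2+1 = m+3 by ring] at h0e
      have r3 : g (m+3) = w2 * g (m+1) + w3 * g m := g_rec m
      have r4 : g (m+4) = w2 * g (m+2) + w3 * g (m+1) := by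
        have := g_rec (m+1)
        rw [show m+1+3 = m+4 by ring, show m+1+1 = m+2 by ring] at this
        exact this
      constructor
      · rw [show 2*(m+3)+2 = (2*m+5)+3 by ring, g_rec,
            show 2*m+5+1 = 2*(m+2)+2 by ring, show 2*m+5 = 2*(m+1)+3 by ring,
            h0e, h1, show m+3+1 = m+4 by ring, r3, r4]
        linear_combination (-(w2*w3*g (m+1) * g (m+2))) * h2
      · rw [show 2*(m+3)+3 = (2*m+6)+3 by ring, g_rec,
            show 2*m+6+1 = 2*(m+2)+3 by ring, show 2*m+6 = 2*(m+2)+2 by ring,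
            h0o, h0e, r3]
        linear_combination (w2*w3*g (m+2)^2) * h2

lemma g_even (n : ℕ) : g (2*n+2) = g (n+1)^2 + w2 * g n ^ 2 := (gdbl n).1

lemma g_odd (n : ℕ) : g (2*n+3) = w3 * g n ^ 2 := (gdbl n).2

/-- `g_{2^t - 3} = 0` for `t ≥ 2`. -/
lemma gzero (b : ℕ) : g (2^(b+2) - 3) = 0 := by
  induction b with
  | zero => rfl
  | succ b ih =>
    have hb : (4:ℕ) ≤ 2^(b+2) := by
      calc (4:ℕ) = 2^2 := rfl
      _ ≤ 2^(b+2) := Nat.pow_le_pow_right (by norm_num) (by omega)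
    rw [show 2^(b+1+2) - 3 = 2*(2^(b+2)-3)+3 by rw [pow_succ]; omega, g_odd, ih]
    ring

/-- Lemma 4.2 in reparametrized form, `s = a+1`, `t = a+b+2`. -/
lemma aux (a b : ℕ) :
    w2 ^ (2^a - 1) * g (2^(a+b+2) - 2^a - 2) ^ 2 =
      ∑ j ∈ Finset.range a,
        w2 ^ (2^a - 2^(j+1)) * w3 ^ (2^j - 1) * g (2^(a+b+3) - 2^(a+1) + 2^j - 3) := by
  induction a generalizing b with
  | zero =>
    have h4 : (4:ℕ) ≤ 2^(b+2) := by
      calc (4:ℕ) = 2^2 := rfl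
      _ ≤ 2^(b+2) := Nat.pow_le_pow_right (by norm_num) (by omega)
    rw [show (0:ℕ)+b+2 = b+2 by ring, show 2^(b+2) - 2^0 - 2 = 2^(b+2) - 3 by omega,
      gzero b]
    simp
  | succ a ih =>
    have hA1 : (1:ℕ) ≤ 2^a := Nat.one_le_two_pow
    have hAQ : 4 * 2^a ≤ 2^(a+b+2) := by
      calc 4 * 2^a = 2^(a+2) := by ring
      _ ≤ 2^(a+b+2) := Nat.pow_le_pow_right (by norm_num) (by omega)
    have e1 : 2^(a+1) = 2*2^a := by ring
    have e2 : 2^(a+2) = 4*2^a := by ring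
    have e3 : 2^(a+b+3) = 2*2^(a+b+2) := by ring
    have e4 : 2^(a+1+b+3) = 4*2^(a+b+2) := by ring
    have e5 : 2^(a+1+b+2) = 2*2^(a+b+2) := by ring
    rw [Finset.sum_range_succ']
    have hterm : ∀ j ∈ Finset.range a,
        w2 ^ (2^(a+1) - 2^(j+1+1)) * w3 ^ (2^(j+1) - 1)
            * g (2^(a+1+b+3) - 2^(a+2) + 2^(j+1) - 3)
          = w3^2 * (w2 ^ (2^a - 2^(j+1)) * w3 ^ (2^j - 1)
            * g (2^(a+b+3) - 2^(a+1) + 2^j - 3))^2 := by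
      intro j hj
      rw [Finset.mem_range] at hj
      have hJ1 : (1:ℕ) ≤ 2^j := Nat.one_le_two_pow
      have hJA : 2^(j+1) ≤ 2^a := Nat.pow_le_pow_right (by norm_num) (by omega)
      have f1 : 2^(j+1) = 2*2^j := by ring
      have f2 : 2^(j+1+1) = 4*2^j := by ring
      rw [show 2^(a+1+b+3) - 2^(a+2) + 2^(j+1) - 3
            = 2*(2^(a+b+3) - 2^(a+1) + 2^j - 3) + 3 by omega, g_odd,
          show 2^(a+1) - 2^(j+1+1) = 2*(2^a - 2^(j+1)) by omega,
          show 2^(j+1) - 1 = 2*(2^j - 1) + 1 by omega]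
      ring
    rw [Finset.sum_congr rfl hterm, ← Finset.mul_sum, ← CharTwo.sum_sq, ← ih b]
    rw [show 2^(a+1+b+3) - 2^(a+2) + 2^0 - 3
          = 2*(2^(a+1+b+2) - 2^(a+1) - 2) + 2 by omega, g_even,
        show 2^(a+1+b+2) - 2^(a+1) - 2 + 1
          = 2*(2^(a+b+2) - 2^a - 2) + 3 by omega, g_odd,
        show 2^(a+1) - 2^(0+1) = 2*(2^a - 1) by omega,
        show 2^(a+1) - 1 = 2*(2^a - 1) + 1 by omega,
        show (2:ℕ)^0 - 1 = 0 by norm_num]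
    linear_combination (-(w2^(2*(2^a-1)) * w3^2 * g (2^(a+b+2) - 2^a - 2) ^4)) * h2

/-- Lemma 4.2: for `1 ≤ s ≤ t - 1`,
`w₂^{2^{s-1}-1} (g_{2^t-2^{s-1}-2})² = Σ_{j=0}^{s-2} w₂^{2^{s-1}-2^{j+1}} w₃^{2^j-1} g_{2^{t+1}-2^s+2^j-3}`. -/
theorem lemma_4_2 (s t : ℕ) (hs : 1 ≤ s) (hst : s ≤ t - 1) :
    w2 ^ (2 ^ (s - 1) - 1) * (g (2 ^ t - 2 ^ (s - 1) - 2)) ^ 2 =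
      ∑ j ∈ Finset.range (s - 1),
        w2 ^ (2 ^ (s - 1) - 2 ^ (j + 1)) * w3 ^ (2 ^ j - 1)
          * g (2 ^ (t + 1) - 2 ^ s + 2 ^ j - 3) := by
  obtain ⟨a, rfl⟩ : ∃ a, s = a + 1 := ⟨s - 1, by omega⟩
  obtain ⟨b, rfl⟩ : ∃ b, t = a + b + 2 := ⟨t - a - 2, by omega⟩
  simp only [Nat.add_sub_cancel]
  rw [show a + b + 2 + 1 = a + b + 3 by ring]
  exact aux a b

end
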